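/- arXiv:math-ph/0002027 — 2 statements merged into one kernel-verified Lean document; each statement's English description precedes it below -/
import Mathlib

section
/- Let k be an even positive integer and let x_1,...,x_k be distinct real (or complex) numbers. Let M be the k×k matrix with M_{ii}=0 and M_{ij}=1/(x_j-x_i) for i≠j. Then det(M) equals the sum over all (k-1)!! perfect pairings {{σ(1),σ(2)},...,{σ(k-1),σ(k)}} of {1,...,k} of the product 1/((x_{σ(1)}-x_{σ(2)})^2 ··· (x_{σ(k-1)}-x_{σ(k)})^2). -/
open Finset

/-- A perfect pairing of `Fin k` is a fixed-point-free involution. -/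
def IsPerfectPairing {k : ℕ} (σ : Equiv.Perm (Fin k)) : Prop :=
  (∀ i, σ (σ i) = i) ∧ ∀ i, σ i ≠ i

instance {k : ℕ} (σ : Equiv.Perm (Fin k)) : Decidable (IsPerfectPairing σ) := by
  unfold IsPerfectPairing; infer_instance

/-!
Expanding the determinant, `det M = ∑ sign σ ∏ᵢ (x i - x (σ i))⁻¹` over the derangements `σ`;
more generally let `D S` be the same sum over the permutations with support exactly `S`.
Fix `a ∈ S`. The permutations in which `a` lies on a cycle of length at least three arise
exactly once from a `τ` with support `S \ {a}` by inserting `a` in front of some `b`; writing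
`c = τ⁻¹ b`, this replaces the factor `1/(x c - x b)` by
`-1/((x c - x a)(x a - x b)) = -(1/(x c - x a) + 1/(x a - x b)) / (x c - x b)`, and the bracket
sums to zero over `b` because `τ` permutes `S \ {a}`. The permutations in which `a` lies on a
transposition `(a b)` contribute `(x a - x b)⁻² D (S \ {a, b})`. The sum over perfect pairings
of `S` satisfies the same recursion, so the two agree.
-/

namespace Equiv.Perm

variable {α : Type*} [DecidableEq α]

theorem swap_mul_apply_of_fixed {τ : Perm α} {a b i : α} (ha : τ a = a) (hb : τ b = b)
    (hia : i ≠ a) (hib : i ≠ b) : (swap a b * τ) i = τ i :=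
  swap_apply_of_ne_of_ne (fun h => hia (τ.injective (h.trans ha.symm)))
    (fun h => hib (τ.injective (h.trans hb.symm)))

theorem swap_mul_mul_swap_mul_of_fixed {τ : Perm α} {a b : α} (ha : τ a = a) (hb : τ b = b) :
    (swap a b * τ) * (swap a b * τ) = τ * τ := by
  have hcomm : τ * swap a b = swap a b * τ := by rw [mul_swap_eq_swap_mul, ha, hb]
  rw [mul_assoc, ← mul_assoc τ, hcomm, mul_assoc, swap_mul_self_mul]

variable [Fintype α]

theorem support_swap_mul_of_fixed {τ : Perm α} {a b : α} (hab : a ≠ b) (ha : τ a = a)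
    (hb : τ b = b) : (swap a b * τ).support = insert a (insert b τ.support) := by
  have hdisj : Disjoint (swap a b) τ := by
    rw [disjoint_iff_disjoint_support, support_swap hab]
    simp [ha, hb]
  rw [hdisj.support_mul, support_swap hab, Finset.insert_union, Finset.singleton_union]

theorem support_swap_mul_of_mem_support {τ : Perm α} {a b : α} (ha : τ a = a)
    (hb : b ∈ τ.support) : (swap a b * τ).support = insert a τ.support := by
  have hab : a ≠ b := by rintro rfl; exact mem_support.mp hb ha
  have hτb : τ b ≠ a := fun h => hab (τ.injective (h.trans ha.symm)).symm
  set σ := swap a b * τ with hσ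
  have hσa : σ a = b := by simp [σ, ha]
  have hσb : σ b = τ b := swap_apply_of_ne_of_ne hτb (mem_support.mp hb)
  have key := support_swap_mul_eq σ a (by rwa [hσa, hσb])
  rw [hσa, hσ, swap_mul_self_mul, Finset.sdiff_singleton_eq_erase] at key
  rw [key, Finset.insert_erase (mem_support.mpr (by rwa [hσa, ne_comm]))]

end Equiv.Perm

open Finset Equiv Equiv.Perm Function

namespace InverseDifferenceMatrix

variable {α K : Type*} [Fintype α] [Field K]

section Derangements

variable [DecidableEq α]

def cycleWeight (x : α → K) (σ : Perm α) : K :=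
  ((sign σ : ℤ) : K) * ∏ i ∈ σ.support, (x i - x (σ i))⁻¹

/-- The principal minor on `S` of the matrix `if i = j then 0 else (x j - x i)⁻¹`. -/
def derangementSum (x : α → K) (S : Finset α) : K :=
  ∑ σ ∈ univ.filter (fun σ : Perm α => σ.support = S), cycleWeight x σ

theorem sum_support_eq_of_apply_apply_eq {β : Type*} [AddCommMonoid β] (F : Perm α → β)
    {S : Finset α} {a : α} (ha : a ∈ S) :
    ∑ σ ∈ univ.filter (fun σ : Perm α => σ.support = S ∧ σ (σ a) = a), F σ =
      ∑ b ∈ S.erase a, ∑ τ ∈ univ.filter (fun τ : Perm α => τ.support = (S.erase a).erase b),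
        F (swap a b * τ) := by
  rw [sum_sigma']
  refine sum_nbij' (fun σ => ⟨σ a, swap a (σ a) * σ⟩) (fun q => swap a q.1 * q.2) ?_ ?_
    (fun σ _ => swap_mul_self_mul _ _ _) ?_ (fun σ _ => by rw [swap_mul_self_mul])
  · intro σ hσ
    simp only [mem_filter, mem_univ, true_and, mem_sigma] at hσ ⊢
    obtain ⟨hS, hσa⟩ := hσ
    have hab : a ≠ σ a := (mem_support.mp (hS ▸ ha)).symm
    have hτa : (swap a (σ a) * σ) a = a := by simp
    have hτb : (swap a (σ a) * σ) (σ a) = σ a := by simp [hσa]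
    have key := support_swap_mul_of_fixed hab hτa hτb
    rw [swap_mul_self_mul, hS] at key
    refine ⟨mem_erase.mpr ⟨hab.symm, hS ▸ apply_mem_support.mpr (hS ▸ ha)⟩, ?_⟩
    rw [key, erase_insert, erase_insert] <;> simp [hτa, hτb, hab]
  · rintro ⟨b, τ⟩ h
    simp only [mem_filter, mem_univ, true_and, mem_sigma] at h ⊢
    obtain ⟨hb, hτ⟩ := h
    have hτa : τ a = a := notMem_support.mp (by simp [hτ])
    have hτb : τ b = b := notMem_support.mp (by simp [hτ])
    refine ⟨?_, by simp [hτa, hτb]⟩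
    rw [support_swap_mul_of_fixed (ne_of_mem_erase hb).symm hτa hτb, hτ, insert_erase hb,
      insert_erase ha]
  · rintro ⟨b, τ⟩ h
    have hτa : τ a = a := notMem_support.mp (by simp_all)
    simp [hτa]

theorem sum_support_eq_of_apply_apply_ne {β : Type*} [AddCommMonoid β] (F : Perm α → β)
    {S : Finset α} {a : α} (ha : a ∈ S) :
    ∑ σ ∈ univ.filter (fun σ : Perm α => σ.support = S ∧ σ (σ a) ≠ a), F σ =
      ∑ b ∈ S.erase a, ∑ τ ∈ univ.filter (fun τ : Perm α => τ.support = S.erase a),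
        F (swap a b * τ) := by
  rw [sum_sigma']
  refine sum_nbij' (fun σ => ⟨σ a, swap a (σ a) * σ⟩) (fun q => swap a q.1 * q.2) ?_ ?_
    (fun σ _ => swap_mul_self_mul _ _ _) ?_ (fun σ _ => by rw [swap_mul_self_mul])
  · intro σ hσ
    simp only [mem_filter, mem_univ, true_and, mem_sigma] at hσ ⊢
    obtain ⟨hS, hσa⟩ := hσ
    refine ⟨mem_erase.mpr ⟨(mem_support.mp (hS ▸ ha)), hS ▸ apply_mem_support.mpr (hS ▸ ha)⟩, ?_⟩
    rw [support_swap_mul_eq σ a hσa, hS, sdiff_singleton_eq_erase]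
  · rintro ⟨b, τ⟩ h
    simp only [mem_filter, mem_univ, true_and, mem_sigma] at h ⊢
    obtain ⟨hb, hτ⟩ := h
    have hτa : τ a = a := notMem_support.mp (by simp [hτ])
    have hbτ : b ∈ τ.support := hτ ▸ hb
    have hτb : τ b ≠ a := fun h => (ne_of_mem_erase hb) (τ.injective (h.trans hτa.symm))
    refine ⟨by rw [support_swap_mul_of_mem_support hτa hbτ, hτ, insert_erase ha], ?_⟩
    simpa [hτa, swap_apply_of_ne_of_ne hτb (mem_support.mp hbτ)] using hτb
  · rintro ⟨b, τ⟩ h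
    have hτa : τ a = a := notMem_support.mp (by simp_all)
    simp [hτa]

theorem cycleWeight_swap_mul_of_fixed (x : α → K) {τ : Perm α} {a b : α} (hab : a ≠ b)
    (ha : τ a = a) (hb : τ b = b) :
    cycleWeight x (swap a b * τ) = ((x a - x b) ^ 2)⁻¹ * cycleWeight x τ := by
  have haτ : a ∉ τ.support := notMem_support.mpr ha
  have hbτ : b ∉ τ.support := notMem_support.mpr hb
  have hrest : ∏ i ∈ τ.support, (x i - x ((swap a b * τ) i))⁻¹ =
      ∏ i ∈ τ.support, (x i - x (τ i))⁻¹ :=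
    prod_congr rfl fun i hi => by
      rw [swap_mul_apply_of_fixed ha hb (ne_of_mem_of_not_mem hi haτ)
        (ne_of_mem_of_not_mem hi hbτ)]
  rw [cycleWeight, cycleWeight, support_swap_mul_of_fixed hab ha hb,
    prod_insert (by simp [hab, haτ]), prod_insert hbτ, hrest, Perm.sign_mul, sign_swap hab]
  simp only [Perm.mul_apply, ha, hb, swap_apply_left, swap_apply_right, ← neg_sub (x a) (x b),
    inv_neg, sq, mul_inv]
  push_cast
  ring

theorem cycleWeight_swap_mul_of_mem_support {x : α → K} (hx : Injective x) {τ : Perm α}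
    {a b : α} (ha : τ a = a) (hb : b ∈ τ.support) :
    cycleWeight x (swap a b * τ) =
      -((x a - x b)⁻¹ + (x (τ⁻¹ b) - x a)⁻¹) * cycleWeight x τ := by
  set c := τ⁻¹ b
  have hτc : τ c = b := by simp [c]
  have haτ : a ∉ τ.support := notMem_support.mpr ha
  have hcτ : c ∈ τ.support := by rwa [← apply_mem_support, hτc]
  have hab : a ≠ b := (ne_of_mem_of_not_mem hb haτ).symm
  have hca : c ≠ a := ne_of_mem_of_not_mem hcτ haτ
  have hcb : c ≠ b := fun h => mem_support.mp hb (h ▸ hτc)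
  have hrest : ∏ i ∈ τ.support.erase c, (x i - x ((swap a b * τ) i))⁻¹ =
      ∏ i ∈ τ.support.erase c, (x i - x (τ i))⁻¹ := by
    refine prod_congr rfl fun i hi => ?_
    have hia : i ≠ a := ne_of_mem_of_not_mem (mem_of_mem_erase hi) haτ
    rw [Perm.mul_apply, swap_apply_of_ne_of_ne (fun h => hia (τ.injective (h.trans ha.symm)))
      (fun h => ne_of_mem_erase hi (τ.injective (h.trans hτc.symm)))]
  rw [cycleWeight, cycleWeight, support_swap_mul_of_mem_support ha hb, prod_insert haτ,
    ← mul_prod_erase _ _ hcτ, ← mul_prod_erase τ.support _ hcτ, hrest, Perm.sign_mul,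
    sign_swap hab]
  simp only [Perm.mul_apply, ha, hτc, swap_apply_left, swap_apply_right]
  have hu : x a - x b ≠ 0 := sub_ne_zero.mpr (hx.ne hab)
  have hv : x c - x a ≠ 0 := sub_ne_zero.mpr (hx.ne hca)
  have huv : x c - x b ≠ 0 := sub_ne_zero.mpr (hx.ne hcb)
  field_simp
  push_cast
  ring

theorem sum_cycleWeight_of_apply_apply_ne_eq_zero {x : α → K} (hx : Injective x) {S : Finset α}
    {a : α} (ha : a ∈ S) :
    ∑ σ ∈ univ.filter (fun σ : Perm α => σ.support = S ∧ σ (σ a) ≠ a), cycleWeight x σ = 0 := by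
  rw [sum_support_eq_of_apply_apply_ne _ ha, sum_comm]
  refine sum_eq_zero fun τ hτ => ?_
  have hτS : τ.support = S.erase a := (mem_filter.mp hτ).2
  have hτa : τ a = a := notMem_support.mp (by simp [hτS])
  have hcancel : ∑ b ∈ S.erase a, ((x a - x b)⁻¹ + (x (τ⁻¹ b) - x a)⁻¹) = 0 := by
    rw [sum_add_distrib, τ⁻¹.sum_comp _ (fun c => (x c - x a)⁻¹)
      (fun c hc => by simpa [hτS, and_comm] using mem_support.mpr hc), ← sum_add_distrib]
    exact sum_eq_zero fun b _ => by rw [← neg_sub, inv_neg, neg_add_cancel]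
  rw [sum_congr rfl fun b hb => cycleWeight_swap_mul_of_mem_support hx hτa (hτS ▸ hb),
    ← sum_mul, sum_neg_distrib, hcancel, neg_zero, zero_mul]

theorem derangementSum_eq_sum_erase {x : α → K} (hx : Injective x) {S : Finset α} {a : α}
    (ha : a ∈ S) :
    derangementSum x S =
      ∑ b ∈ S.erase a, ((x a - x b) ^ 2)⁻¹ * derangementSum x ((S.erase a).erase b) := by
  rw [derangementSum, ← sum_filter_add_sum_filter_not _ (fun σ : Perm α => σ (σ a) = a),
    filter_filter, filter_filter, sum_cycleWeight_of_apply_apply_ne_eq_zero hx ha, add_zero,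
    sum_support_eq_of_apply_apply_eq _ ha]
  refine sum_congr rfl fun b hb => ?_
  rw [derangementSum, mul_sum]
  refine sum_congr rfl fun τ hτ => ?_
  have hτS : τ.support = (S.erase a).erase b := (mem_filter.mp hτ).2
  exact cycleWeight_swap_mul_of_fixed x (ne_of_mem_erase hb).symm
    (notMem_support.mp (by simp [hτS])) (notMem_support.mp (by simp [hτS]))

theorem derangementSum_empty (x : α → K) : derangementSum x ∅ = 1 := by
  simp [derangementSum, cycleWeight, Perm.support_eq_empty_iff, filter_eq']

theorem det_eq_derangementSum (x : α → K) :
    (Matrix.of fun i j : α => if i = j then 0 else (x j - x i)⁻¹).det = derangementSum x univ := by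
  rw [Matrix.det_apply, derangementSum,
    ← sum_filter_of_ne (p := fun σ : Perm α => σ.support = univ)]
  · refine sum_congr rfl fun σ hσ => ?_
    have hσ : σ.support = univ := (mem_filter.mp hσ).2
    rw [cycleWeight, hσ, Units.smul_def, zsmul_eq_mul]
    congr 1
    refine prod_congr rfl fun i _ => ?_
    simp [mem_support.mp (hσ ▸ mem_univ i)]
  · intro σ _ hσ
    refine eq_univ_iff_forall.mpr fun i => mem_support.mpr fun hi => hσ ?_
    rw [prod_eq_zero (mem_univ i) (by simp [hi]), smul_zero]

end Derangements

section Pairings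

variable [LinearOrder α]

def pairingWeight (x : α → K) (σ : Perm α) : K :=
  ∏ i ∈ univ.filter (fun i => i < σ i), ((x i - x (σ i)) ^ 2)⁻¹

def pairingSum (x : α → K) (S : Finset α) : K :=
  ∑ σ ∈ univ.filter (fun σ : Perm α => σ.support = S ∧ σ * σ = 1), pairingWeight x σ

theorem pairingWeight_swap_mul_of_fixed (x : α → K) {τ : Perm α} {a b : α} (hab : a ≠ b)
    (ha : τ a = a) (hb : τ b = b) :
    pairingWeight x (swap a b * τ) = ((x a - x b) ^ 2)⁻¹ * pairingWeight x τ := by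
  wlog hlt : a < b generalizing a b
  · rw [swap_comm, this hab.symm hb ha (lt_of_le_of_ne (not_lt.mp hlt) hab.symm),
      ← neg_sub (x a), neg_sq]
  have hfilter : univ.filter (fun i => i < (swap a b * τ) i) =
      insert a (univ.filter (fun i => i < τ i)) := by
    ext i
    simp only [mem_filter, mem_univ, true_and, mem_insert]
    by_cases hia : i = a
    · simp [hia, ha, hlt, Perm.mul_apply]
    by_cases hib : i = b
    · simp [hib, hb, hlt.not_gt, hlt.ne', Perm.mul_apply]
    rw [swap_mul_apply_of_fixed ha hb hia hib, or_iff_right hia]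
  rw [pairingWeight, pairingWeight, hfilter, prod_insert (by simp [ha])]
  congr 1
  · simp [ha]
  · refine prod_congr rfl fun i hi => ?_
    have hi : i < τ i := (mem_filter.mp hi).2
    rw [swap_mul_apply_of_fixed ha hb (by rintro rfl; simp [ha] at hi)
      (by rintro rfl; simp [hb] at hi)]

theorem pairingSum_eq_sum_erase (x : α → K) {S : Finset α} {a : α} (ha : a ∈ S) :
    pairingSum x S =
      ∑ b ∈ S.erase a, ((x a - x b) ^ 2)⁻¹ * pairingSum x ((S.erase a).erase b) := by
  have hfilter : univ.filter (fun σ : Perm α => σ.support = S ∧ σ * σ = 1) =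
      (univ.filter (fun σ : Perm α => σ.support = S ∧ σ (σ a) = a)).filter (fun σ => σ * σ = 1) := by
    rw [filter_filter]
    refine filter_congr fun σ _ => ⟨fun h => ⟨⟨h.1, ?_⟩, h.2⟩, fun h => ⟨h.1.1, h.2⟩⟩
    rw [← Perm.mul_apply, h.2, Perm.one_apply]
  rw [pairingSum, hfilter, sum_filter, sum_support_eq_of_apply_apply_eq _ ha]
  refine sum_congr rfl fun b hb => ?_
  rw [pairingSum, ← filter_filter, sum_filter (fun τ : Perm α => τ * τ = 1), mul_sum]
  refine sum_congr rfl fun τ hτ => ?_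
  have hτS : τ.support = (S.erase a).erase b := (mem_filter.mp hτ).2
  have hτa : τ a = a := notMem_support.mp (by simp [hτS])
  have hτb : τ b = b := notMem_support.mp (by simp [hτS])
  rw [swap_mul_mul_swap_mul_of_fixed hτa hτb, pairingWeight_swap_mul_of_fixed x
    (ne_of_mem_erase hb).symm hτa hτb, mul_ite, mul_zero]

theorem pairingSum_empty (x : α → K) : pairingSum x ∅ = 1 := by
  have : univ.filter (fun σ : Perm α => σ.support = ∅ ∧ σ * σ = 1) = {1} := by
    ext σ
    simp +contextual [Perm.support_eq_empty_iff]
  rw [pairingSum, this, sum_singleton]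
  simp [pairingWeight]

theorem derangementSum_eq_pairingSum {x : α → K} (hx : Injective x) (S : Finset α) :
    derangementSum x S = pairingSum x S := by
  induction S using strongInduction with
  | H S ih =>
    obtain rfl | ⟨a, ha⟩ := S.eq_empty_or_nonempty
    · rw [derangementSum_empty, pairingSum_empty]
    rw [derangementSum_eq_sum_erase hx ha, pairingSum_eq_sum_erase x ha]
    refine sum_congr rfl fun b _ => ?_
    rw [ih _ ((erase_subset _ _).trans_ssubset (erase_ssubset ha))]

end Pairings

end InverseDifferenceMatrix

open InverseDifferenceMatrix in
theorem det_inverse_difference_matrix_eq_sum_pairings_general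
    {k : ℕ} (x : Fin k → ℂ)
    (hx : Function.Injective x) :
    Matrix.det (Matrix.of fun i j : Fin k =>
        if i = j then 0 else (x j - x i)⁻¹) =
      ∑ σ ∈ Finset.univ.filter (fun σ : Equiv.Perm (Fin k) => IsPerfectPairing σ),
        ∏ i ∈ Finset.univ.filter (fun i : Fin k => i < σ i),
          ((x i - x (σ i)) ^ 2)⁻¹ := by
  rw [det_eq_derangementSum, derangementSum_eq_pairingSum hx, pairingSum]
  refine sum_congr (filter_congr fun σ _ => ?_) fun σ _ => rfl
  simp [IsPerfectPairing, eq_univ_iff_forall, Perm.ext_iff, and_comm]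

/-- Lemma 3 of Kenyon, "Dominos and the Gaussian free field": for `k` even and
`x₁, …, x_k` distinct, the `k × k` matrix `M` with `M i i = 0` and
`M i j = 1/(x j − x i)` for `i ≠ j` has determinant equal to the sum over all
perfect pairings of `{1, …, k}` of the product of `1/(x_a − x_b)²` over the
pairs `{a, b}` of the pairing. -/
theorem det_inverse_difference_matrix_eq_sum_pairings
    {k : ℕ} (hk : Even k) (hk0 : 0 < k) (x : Fin k → ℂ)
    (hx : Function.Injective x) :
    Matrix.det (Matrix.of fun i j : Fin k =>
        if i = j then 0 else (x j - x i)⁻¹) =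
      ∑ σ ∈ Finset.univ.filter (fun σ : Equiv.Perm (Fin k) => IsPerfectPairing σ),
        ∏ i ∈ Finset.univ.filter (fun i : Fin k => i < σ i),
          ((x i - x (σ i)) ^ 2)⁻¹ :=
  det_inverse_difference_matrix_eq_sum_pairings_general x hx
end

section
/- Let k be even and M(x_1,...,x_k) the k×k matrix with zero diagonal and entries 1/(x_j-x_i). Viewed as a rational function of x_1, det(M) has at worst a double pole at x_1=x_2, and the coefficient of 1/(x_1-x_2)^2 in its Laurent expansion at x_1=x_2 equals det(M_{12}), where M_{12} is obtained from M by deleting the first two rows and columns. -/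
/-!
Multiplying row and column `0` of `M(t, x₂, …, x_k)` by `t - x₂` multiplies the determinant by
`(t - x₂)²` and produces a matrix whose entries are analytic in `t` at `x₂`: the two entries
`±1/(t - x₂)` become `∓1`, and all other new entries vanish at `t = x₂`. At `t = x₂` the first row
and column of that matrix are `-e₂` and `e₂`, so its determinant there is `det M₁₂`. Expanding the
analytic determinant to second order at `x₂` and dividing by `(t - x₂)²` gives the Laurent
expansion.
-/

open Matrix

theorem Matrix.det_eq_neg_mul_det_submatrix_succ_succ {R : Type*} [CommRing R] {n : ℕ}
    (A : Matrix (Fin (n + 2)) (Fin (n + 2)) R)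
    (hcol : ∀ i, i ≠ 1 → A i 0 = 0) (hrow : ∀ j, j ≠ 1 → A 0 j = 0) :
    A.det = -(A 1 0 * A 0 1) *
      (A.submatrix (fun i : Fin n => i.succ.succ) fun j : Fin n => j.succ.succ).det := by
  have hcol' : ∀ i : Fin n, A i.succ.succ 0 = 0 := fun i =>
    hcol _ (Fin.succ_succ_ne_one i)
  have hrow' : ∀ j : Fin n, A 0 j.succ.succ = 0 := fun j =>
    hrow _ (Fin.succ_succ_ne_one j)
  rw [det_succ_column_zero, Fin.sum_univ_succ, Fin.sum_univ_succ, hcol 0 zero_ne_one]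
  simp only [hcol', mul_zero, zero_mul, Finset.sum_const_zero, add_zero, zero_add]
  rw [det_succ_row_zero, Fin.sum_univ_succ]
  simp [Fin.succAbove_ne_zero_zero, hrow', submatrix_submatrix, Function.comp_def, mul_assoc]

theorem AnalyticAt.matrix_det {𝕜 E A ι : Type*} [NontriviallyNormedField 𝕜]
    [NormedAddCommGroup E] [NormedSpace 𝕜 E] [NormedCommRing A] [NormedAlgebra 𝕜 A]
    [Fintype ι] [DecidableEq ι] {f : E → Matrix ι ι A} {z : E}
    (hf : ∀ i j, AnalyticAt 𝕜 (fun t => f t i j) z) :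
    AnalyticAt 𝕜 (fun t => (f t).det) z := by
  simp only [det_apply, Units.smul_def, zsmul_eq_mul]
  exact Finset.analyticAt_fun_sum _ fun σ _ =>
    analyticAt_const.mul (Finset.analyticAt_fun_prod _ fun i _ => hf (σ i) i)

theorem AnalyticAt.exists_eq_add_smul_add_sq_smul {𝕜 E : Type*} [NontriviallyNormedField 𝕜]
    [NormedAddCommGroup E] [NormedSpace 𝕜 E] {g : 𝕜 → E} {a : 𝕜} (hg : AnalyticAt 𝕜 g a) :
    ∃ c : E, ∃ r : 𝕜 → E, ContinuousAt r a ∧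
      ∀ t, g t = g a + (t - a) • c + (t - a) ^ 2 • r t := by
  obtain ⟨p, hp⟩ := hg
  refine ⟨dslope g a a, dslope (dslope g a) a,
    hp.has_fpower_series_dslope_fslope.has_fpower_series_dslope_fslope.continuousAt, fun t => ?_⟩
  rw [sq, mul_smul, sub_smul_dslope, add_assoc, ← smul_add, add_sub_cancel, sub_smul_dslope,
    add_sub_cancel]

section

variable {K : Type*} [Field K] {n : ℕ}

def invDiffMatrix {ι : Type*} [DecidableEq ι] (x : ι → K) : Matrix ι ι K :=
  of fun i j => if i = j then 0 else (x j - x i)⁻¹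

/-- The matrix `D * invDiffMatrix (update x 0 t) * D` with `D = diag(t - x 1, 1, …, 1)`, with the
entries `(0, 1)` and `(1, 0)` written as their values `-1` and `1` for `t ≠ x 1`. -/
def regularizedMatrix (x : Fin (n + 2) → K) (t : K) : Matrix (Fin (n + 2)) (Fin (n + 2)) K :=
  of fun i j =>
    if i = j then 0
    else if i = 0 then (if j = 1 then -1 else (t - x 1) * (x j - t)⁻¹)
    else if j = 0 then (if i = 1 then 1 else (t - x 1) * (t - x i)⁻¹)
    else (x j - x i)⁻¹

theorem regularizedMatrix_eq (x : Fin (n + 2) → K) {t : K} (ht : t ≠ x 1) :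
    regularizedMatrix x t = diagonal (Pi.mulSingle 0 (t - x 1)) *
      invDiffMatrix (Function.update x 0 t) * diagonal (Pi.mulSingle 0 (t - x 1)) := by
  have h : t - x 1 ≠ 0 := sub_ne_zero.mpr ht
  have h' : (t - x 1) * (x 1 - t)⁻¹ = -1 := by
    rw [← neg_sub t (x 1), inv_neg, mul_neg, mul_inv_cancel₀ h]
  ext i j
  rw [mul_diagonal, diagonal_mul]
  obtain rfl | ⟨i, rfl⟩ := Fin.eq_zero_or_eq_succ i <;>
  obtain rfl | ⟨j, rfl⟩ := Fin.eq_zero_or_eq_succ j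
  · simp [regularizedMatrix, invDiffMatrix]
  · obtain rfl | ⟨j, rfl⟩ := Fin.eq_zero_or_eq_succ j
    · simp [regularizedMatrix, invDiffMatrix, h']
    · simp [regularizedMatrix, invDiffMatrix, Fin.succ_succ_ne_one,
        eq_comm (a := (0 : Fin (n + 2)))]
  · obtain rfl | ⟨i, rfl⟩ := Fin.eq_zero_or_eq_succ i
    · simp [regularizedMatrix, invDiffMatrix, h]
    · simp [regularizedMatrix, invDiffMatrix, Fin.succ_succ_ne_one, mul_comm]
  · simp [regularizedMatrix, invDiffMatrix, Fin.succ_ne_zero]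

theorem det_regularizedMatrix (x : Fin (n + 2) → K) {t : K} (ht : t ≠ x 1) :
    (regularizedMatrix x t).det =
      (t - x 1) ^ 2 * (invDiffMatrix (Function.update x 0 t)).det := by
  rw [regularizedMatrix_eq x ht, det_mul, det_mul, det_diagonal, Fintype.prod_pi_mulSingle']
  ring

theorem det_regularizedMatrix_self (x : Fin (n + 2) → K) :
    (regularizedMatrix x (x 1)).det = (invDiffMatrix fun i : Fin n => x i.succ.succ).det := by
  rw [det_eq_neg_mul_det_submatrix_succ_succ]
  · have hminor : ((regularizedMatrix x (x 1)).submatrix (fun i : Fin n => i.succ.succ)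
        fun j => j.succ.succ) = invDiffMatrix fun i : Fin n => x i.succ.succ := by
      ext i j
      simp [regularizedMatrix, invDiffMatrix, Fin.succ_ne_zero]
    rw [hminor]
    simp [regularizedMatrix]
  · intro i hi
    simp [regularizedMatrix, hi]
  · intro j hj
    simp [regularizedMatrix, hj]

end

section

variable {𝕜 : Type*} [NontriviallyNormedField 𝕜] {n : ℕ}

theorem analyticAt_regularizedMatrix_apply (x : Fin (n + 2) → 𝕜)
    (hx : ∀ i : Fin n, x i.succ.succ ≠ x 1) (i j : Fin (n + 2)) :
    AnalyticAt 𝕜 (fun t => regularizedMatrix x t i j) (x 1) := by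
  obtain rfl | ⟨i, rfl⟩ := Fin.eq_zero_or_eq_succ i <;>
  obtain rfl | ⟨j, rfl⟩ := Fin.eq_zero_or_eq_succ j
  · simp [regularizedMatrix, analyticAt_const]
  · obtain rfl | ⟨j, rfl⟩ := Fin.eq_zero_or_eq_succ j
    · simp [regularizedMatrix, analyticAt_const]
    · simp only [regularizedMatrix, of_apply, eq_comm (a := (0 : Fin (n + 2))), Fin.succ_ne_zero,
        Fin.succ_succ_ne_one, if_true, if_false]
      fun_prop (disch := exact sub_ne_zero.mpr (hx j))
  · obtain rfl | ⟨i, rfl⟩ := Fin.eq_zero_or_eq_succ i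
    · simp [regularizedMatrix, analyticAt_const]
    · simp only [regularizedMatrix, of_apply, Fin.succ_ne_zero, Fin.succ_succ_ne_one, if_true,
        if_false]
      fun_prop (disch := exact sub_ne_zero.mpr (hx i).symm)
  · simp [regularizedMatrix, Fin.succ_ne_zero, analyticAt_const]

theorem exists_det_invDiffMatrix_update_eq (x : Fin (n + 2) → 𝕜)
    (hx : ∀ i : Fin n, x i.succ.succ ≠ x 1) :
    ∃ c : 𝕜, ∃ r : 𝕜 → 𝕜, ContinuousAt r (x 1) ∧ ∀ t, t ≠ x 1 →
      (invDiffMatrix (Function.update x 0 t)).det =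
        (invDiffMatrix fun i : Fin n => x i.succ.succ).det / (t - x 1) ^ 2 + c / (t - x 1) +
          r t := by
  obtain ⟨c, r, hr, hexp⟩ := (AnalyticAt.matrix_det
    (analyticAt_regularizedMatrix_apply x hx)).exists_eq_add_smul_add_sq_smul
  refine ⟨c, r, hr, fun t ht => ?_⟩
  have key := hexp t
  rw [det_regularizedMatrix x ht, det_regularizedMatrix_self] at key
  have hne : t - x 1 ≠ 0 := sub_ne_zero.mpr ht
  field_simp
  simp only [smul_eq_mul] at key
  linear_combination key

end

/-- For `k` even, view the determinant of the `k × k` matrix `M(x₁,…,x_k)` with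
zero diagonal and entries `1/(x j − x i)` as a function of `x₁` (with
`x₂, …, x_k` fixed and distinct).  Then it has at worst a double pole at
`x₁ = x₂`: there are a constant `c` (the simple-pole coefficient) and a
function `r` continuous at `x₂` (the regular part) such that for every `t`
distinct from `x₂, …, x_k`,
`det M(t, x₂, …, x_k) = det M₁₂ / (t − x₂)² + c / (t − x₂) + r t`,
where `M₁₂ = M(x₃,…,x_k)` is obtained by deleting the first two rows and
columns. -/
theorem det_inverse_difference_matrix_double_pole
    {k : ℕ} (hk2 : 2 ≤ k) (x : Fin k → ℂ)
    (hx : ∀ i j : Fin k, i ≠ j → 1 ≤ (i : ℕ) → 1 ≤ (j : ℕ) → x i ≠ x j) :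
    ∃ c : ℂ, ∃ r : ℂ → ℂ,
      ContinuousAt r (x ⟨1, by omega⟩) ∧
      ∀ t : ℂ, (∀ j : Fin k, 1 ≤ (j : ℕ) → t ≠ x j) →
        Matrix.det (Matrix.of fun i j : Fin k =>
            if i = j then 0 else (Function.update x ⟨0, by omega⟩ t j - Function.update x ⟨0, by omega⟩ t i)⁻¹) =
          Matrix.det (Matrix.of fun i j : Fin (k - 2) =>
              if i = j then 0 else
                (x ⟨j + 2, by omega⟩ - x ⟨i + 2, by omega⟩)⁻¹) /
              (t - x ⟨1, by omega⟩) ^ 2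
            + c / (t - x ⟨1, by omega⟩) + r t := by
  obtain ⟨n, rfl⟩ : ∃ n, k = n + 2 := ⟨k - 2, by omega⟩
  obtain ⟨c, r, hr, hexp⟩ := exists_det_invDiffMatrix_update_eq x fun i =>
    hx _ _ (Fin.succ_succ_ne_one i) (by simp) (by simp)
  -- the two matrices of the statement unfold to `invDiffMatrix (update x 0 t)` and
  -- `invDiffMatrix fun i => x i.succ.succ`
  exact ⟨c, r, hr, fun t ht => hexp t (ht 1 (by simp))⟩
end
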